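/- Let N be a positive even integer and consider the functions on ℂ ∖ {0, 1} given by y_1(z) = (z/(1−z))^{N+1} P_N(1−z)², y_2(z) = P_N(1−z) P_N(z), and y_3(z) = ((1−z)/z)^{N+1} P_N(z)². Then each y_i satisfies the third-order differential equation z²(1−z)² y''' − 3(2z−1)z(1−z) y'' + ((N²+2N−6)z(1−z) − (N²+2N)) y' + (N²+2N)(1/2 − z) y = 0 on ℂ ∖ {0,1}, and y_1, y_2, y_3 are linearly independent over ℂ. -/

import Mathlib

open Polynomial Finset

noncomputable section

/-- The rising Pochhammer symbol `(q)_k = q(q+1)⋯(q+k-1)` over `ℚ`. -/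
def poch (q : ℚ) (k : ℕ) : ℚ := (ascPochhammer ℚ k).eval q

/-- Coefficient of `z^k` in `P_N(z) = ₂F₁(-N/2, N/2+1; -N; z)`. -/
def Pcoef (N k : ℕ) : ℚ :=
  poch (-(N : ℚ) / 2) k * poch ((N : ℚ) / 2 + 1) k /
    (poch (-(N : ℚ)) k * (Nat.factorial k : ℚ))

/-- The polynomial `P_N(z)`. -/
def Ppoly (N : ℕ) : ℚ[X] := ∑ k ∈ Finset.range (N / 2 + 1), C (Pcoef N k) * X ^ k

/-- `P_N` as a complex polynomial. -/
def PpolyC (N : ℕ) : ℂ[X] := (Ppoly N).map (algebraMap ℚ ℂ)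

/-- `y₁(z) = (z/(1-z))^{N+1} P_N(1-z)²`. -/
def y1 (N : ℕ) (z : ℂ) : ℂ := (z / (1 - z)) ^ (N + 1) * ((PpolyC N).eval (1 - z)) ^ 2

/-- `y₂(z) = P_N(1-z) P_N(z)`. -/
def y2 (N : ℕ) (z : ℂ) : ℂ := (PpolyC N).eval (1 - z) * (PpolyC N).eval z

/-- `y₃(z) = ((1-z)/z)^{N+1} P_N(z)²`. -/
def y3 (N : ℕ) (z : ℂ) : ℂ := ((1 - z) / z) ^ (N + 1) * ((PpolyC N).eval z) ^ 2

/-- A function `y` satisfies the third-order differential equation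
`z²(1-z)² y''' - 3(2z-1)z(1-z) y'' + ((N²+2N-6)z(1-z) - (N²+2N)) y' + (N²+2N)(1/2-z) y = 0`
on `ℂ ∖ {0, 1}`. -/
def SatThirdOrderODE (N : ℕ) (y : ℂ → ℂ) : Prop :=
  ∀ z : ℂ, z ≠ 0 → z ≠ 1 →
    z ^ 2 * (1 - z) ^ 2 * deriv^[3] y z
      - 3 * (2 * z - 1) * z * (1 - z) * deriv^[2] y z
      + (((N : ℂ) ^ 2 + 2 * N - 6) * z * (1 - z) - ((N : ℂ) ^ 2 + 2 * N)) * deriv y z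
      + ((N : ℂ) ^ 2 + 2 * N) * (1 / 2 - z) * y z = 0


/-!
`P_N` solves the hypergeometric equation `z(1-z)w'' - (N + 2z)w' + ((N² + 2N)/4)w = 0`, and
`P_N(1-z)` the same equation with `-N` replaced by `N + 2`. Multiplying them by
`((1-z)/z)^((N+1)/2)` and `(z/(1-z))^((N+1)/2)` respectively turns both into solutions of the
single equation `(z(1-z)u')' + ((N² + 2N)/4 - (N+1)²/(4z(1-z)))u = 0`, whose symmetric square is
the third-order equation; `y₁, y₂, y₃` are the products of these two solutions, in which the
half-integer powers pair up into integer ones. To avoid square roots, the symmetric square is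
checked directly on `y = r·f·g` with `r'/r = c/(z(1-z))`: the derivatives of such a `y` are `r`
times polynomials over powers of `z(1-z)`, so the equation becomes a polynomial identity, which
follows from the two hypergeometric equations. Linear independence: after clearing denominators,
evaluate at `0` and `1`, where `P_N(0) = 1`.
-/

namespace SymSquare

section Algebraic

variable {R : Type*} [CommRing R]

/-- The hypergeometric equation of `₂F₁(a, b; 1 + 2α; z)` with `a + b = 1` and `A = -ab`. -/
def HypergeometricODE (A α : R) (f : R[X]) : Prop :=
  X * (1 - X) * derivative (derivative f) + (1 - 2 * X + 2 * C α) * derivative f + C A * f = 0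

theorem HypergeometricODE.map {S : Type*} [CommRing S] {A α : R} {f : R[X]}
    (hf : HypergeometricODE A α f) (φ : R →+* S) :
    HypergeometricODE (φ A) (φ α) (f.map φ) := by
  have h := congrArg (Polynomial.map φ) hf
  simp only [Polynomial.map_add, Polynomial.map_mul, Polynomial.map_sub, Polynomial.map_one,
    Polynomial.map_X, Polynomial.map_C, Polynomial.map_ofNat, Polynomial.map_zero,
    ← derivative_map] at h
  exact h

theorem HypergeometricODE.comp_one_sub {A α : R} {f : R[X]} (hf : HypergeometricODE A α f) :
    HypergeometricODE A (-α) (f.comp (1 - X)) := by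
  have h := congrArg (·.comp (1 - X)) hf
  simp only [add_comp, mul_comp, sub_comp, one_comp, X_comp, C_comp, ofNat_comp,
    zero_comp] at h
  unfold HypergeometricODE
  simp only [derivative_comp, derivative_sub, derivative_one, derivative_X, zero_sub, neg_mul,
    one_mul, map_neg]
  linear_combination h

/-- If `r'/r = c/(z(1-z))`, the `k`-th derivative of `r·F` is `r · gaugeJet c F k / (z(1-z))^k`. -/
def gaugeJet (c : R) (F : R[X]) : ℕ → R[X]
  | 0 => F
  | k + 1 => X * (1 - X) * derivative (gaugeJet c F k)
      + (C c - (k : R[X]) * (1 - 2 * X)) * gaugeJet c F k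

/-- `z(1-z)/r` times the symmetric square of `(z(1-z)u')' + (A - B/(z(1-z)))u = 0`, applied to
`r·F` with `r'/r = c/(z(1-z))`. -/
def symSqPoly (A B c : R) (F : R[X]) : R[X] :=
  gaugeJet c F 3 + 3 * (1 - 2 * X) * gaugeJet c F 2
    + ((4 * C A - 6) * (X * (1 - X)) + 1 - 4 * C B) * gaugeJet c F 1
    + 2 * C A * (X * (1 - X) * (1 - 2 * X)) * F

theorem symSqPoly_mul_eq_zero {A B α β : R} {f g : R[X]} (hf : HypergeometricODE A α f)
    (hg : HypergeometricODE A β g) (hα : α ^ 2 = B) (hβ : β ^ 2 = B) :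
    symSqPoly A B (α + β) (f * g) = 0 := by
  have hf' := congrArg derivative hf
  have hg' := congrArg derivative hg
  have hα' : C α ^ 2 = C B := by rw [← map_pow, hα]
  have hβ' : C β ^ 2 = C B := by rw [← map_pow, hβ]
  unfold HypergeometricODE at hf hg
  simp only [symSqPoly, gaugeJet, derivative_mul, derivative_sub, derivative_X,
    derivative_one, derivative_C, derivative_natCast, derivative_ofNat, derivative_zero,
    map_add] at hf' hg' ⊢
  set D : R[X] := X * (1 - X)
  set φ := D * derivative f + C α * f
  set ψ := D * derivative g + C β * g
  -- With `θ = D d/dz + α`, `hf` says `θ (θ f) = (α² - A D) f`; each use of this in expanding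
  -- `symSqPoly` contributes one of the terms below.
  linear_combination (D * (1 - 2 * X) * g + C α * D * g + 3 * D * ψ) * hf + D ^ 2 * g * hf'
    + (D * (1 - 2 * X) * f + C β * D * f + 3 * D * φ) * hg + D ^ 2 * f * hg'
    + (D * derivative f * g + C α * f * g + 3 * f * ψ) * hα'
    + (D * derivative g * f + C β * f * g + 3 * g * φ) * hβ'

end Algebraic

section Analytic

variable {𝕜 : Type*} [NontriviallyNormedField 𝕜]

theorem hasDerivAt_gaugeJet {r : 𝕜 → 𝕜} {c z : 𝕜} (hz : z * (1 - z) ≠ 0)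
    (hr : HasDerivAt r (c * r z / (z * (1 - z))) z) (F : 𝕜[X]) (k : ℕ) :
    HasDerivAt (fun w => r w * eval w (gaugeJet c F k) / (w * (1 - w)) ^ k)
      (r z * eval z (gaugeJet c F (k + 1)) / (z * (1 - z)) ^ (k + 1)) z := by
  have hD : HasDerivAt (fun w => w * (1 - w)) (1 - 2 * z) z :=
    ((hasDerivAt_id' (x := z)).fun_mul ((hasDerivAt_id' (x := z)).const_sub 1)).congr_deriv
      (by ring)
  refine ((hr.fun_mul ((gaugeJet c F k).hasDerivAt z)).fun_div (hD.fun_pow k)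
    (pow_ne_zero k hz)).congr_deriv ?_
  obtain ⟨hz0, hz1⟩ := mul_ne_zero_iff.mp hz
  simp only [gaugeJet, eval_add, eval_mul, eval_sub, eval_X, eval_one, eval_C, eval_natCast,
    eval_ofNat]
  rcases k with _ | k
  · field_simp
    ring
  · simp only [Nat.add_sub_cancel, Nat.cast_add, Nat.cast_one]
    field_simp
    ring

theorem iterate_deriv_eq_gaugeJet {r : 𝕜 → 𝕜} {c : 𝕜}
    (hr : ∀ z, z ≠ 0 → z ≠ 1 → HasDerivAt r (c * r z / (z * (1 - z))) z) (F : 𝕜[X]) (k : ℕ)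
    {z : 𝕜} (hz0 : z ≠ 0) (hz1 : z ≠ 1) :
    deriv^[k] (fun w => r w * eval w F) z = r z * eval z (gaugeJet c F k) / (z * (1 - z)) ^ k := by
  induction k generalizing z with
  | zero => simp [gaugeJet]
  | succ k ih =>
    have hnear : deriv^[k] (fun w => r w * eval w F) =ᶠ[nhds z]
        fun w => r w * eval w (gaugeJet c F k) / (w * (1 - w)) ^ k :=
      ((eventually_ne_nhds hz0).and (eventually_ne_nhds hz1)).mono fun w hw => ih hw.1 hw.2
    have hz : z * (1 - z) ≠ 0 := mul_ne_zero hz0 (sub_ne_zero.mpr hz1.symm)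
    rw [Function.iterate_succ_apply', hnear.deriv_eq,
      (hasDerivAt_gaugeJet hz (hr z hz0 hz1) F k).deriv]

variable {z : 𝕜}

theorem hasDerivAt_div_one_sub_pow (m : ℕ) (hz0 : z ≠ 0) (hz1 : z ≠ 1) :
    HasDerivAt (fun w => (w / (1 - w)) ^ m) (m * (z / (1 - z)) ^ m / (z * (1 - z))) z := by
  have hz1' : 1 - z ≠ 0 := sub_ne_zero.mpr hz1.symm
  refine (((hasDerivAt_id' (x := z)).fun_div ((hasDerivAt_id' (x := z)).const_sub 1)
    hz1').fun_pow m).congr_deriv ?_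
  rcases m with _ | m
  · simp
  · simp only [Nat.add_sub_cancel, Nat.cast_add, Nat.cast_one, div_pow]
    field_simp
    ring

theorem hasDerivAt_one_sub_div_pow (m : ℕ) (hz0 : z ≠ 0) (hz1 : z ≠ 1) :
    HasDerivAt (fun w => ((1 - w) / w) ^ m) (-m * ((1 - z) / z) ^ m / (z * (1 - z))) z := by
  have hz1' : 1 - z ≠ 0 := sub_ne_zero.mpr hz1.symm
  refine ((((hasDerivAt_id' (x := z)).const_sub 1).fun_div (hasDerivAt_id' (x := z))
    hz0).fun_pow m).congr_deriv ?_
  rcases m with _ | m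
  · simp
  · simp only [Nat.add_sub_cancel, Nat.cast_add, Nat.cast_one, div_pow]
    field_simp
    ring

end Analytic

theorem linearIndependent_gauged_products {p : ℂ[X]} (hp : p.eval 0 ≠ 0) {n : ℕ} (hn : n ≠ 0) :
    LinearIndependent ℂ
      ![fun z : {z : ℂ // z ≠ 0 ∧ z ≠ 1} => ((z : ℂ) / (1 - z)) ^ n * p.eval (1 - (z : ℂ)) ^ 2,
        fun z : {z : ℂ // z ≠ 0 ∧ z ≠ 1} => p.eval (1 - (z : ℂ)) * p.eval (z : ℂ),
        fun z : {z : ℂ // z ≠ 0 ∧ z ≠ 1} => ((1 - (z : ℂ)) / z) ^ n * p.eval (z : ℂ) ^ 2] := by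
  rw [Fintype.linearIndependent_iff]
  intro c hc
  set q := p.comp (1 - X)
  set T : ℂ[X] := C (c 0) * X ^ (2 * n) * q ^ 2 + C (c 1) * (X * (1 - X)) ^ n * (q * p)
    + C (c 2) * (1 - X) ^ (2 * n) * p ^ 2
  have hT : T = 0 := by
    refine T.eq_zero_of_infinite_isRoot ((Set.toFinite {0, 1}).infinite_compl.mono
      fun z hz => ?_)
    simp only [Set.mem_compl_iff, Set.mem_insert_iff, Set.mem_singleton_iff, not_or] at hz
    obtain ⟨hz0, hz1⟩ : z ≠ 0 ∧ 1 - z ≠ 0 := ⟨hz.1, sub_ne_zero.mpr (Ne.symm hz.2)⟩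
    have hcz := congrFun hc ⟨z, hz⟩
    simp only [Fin.sum_univ_three, Pi.add_apply, Pi.smul_apply, Matrix.cons_val, smul_eq_mul,
      Pi.zero_apply] at hcz
    simp only [Set.mem_ofPred_eq, IsRoot, T, q, eval_add, eval_mul, eval_pow, eval_C, eval_X,
      eval_sub, eval_one, eval_comp]
    rw [← mul_zero ((z * (1 - z)) ^ n), ← hcz, div_pow, div_pow, mul_pow, two_mul, pow_add,
      pow_add]
    field_simp
  have hq : q.eval 1 = p.eval 0 := by simp [q, eval_comp]
  have h2 : c 2 = 0 := by simpa [T, hp, hn] using congrArg (eval 0) hT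
  have h0 : c 0 = 0 := by simpa [T, hq, hp, hn] using congrArg (eval 1) hT
  have h1 : c 1 = 0 := by
    have hp0 : p ≠ 0 := fun h => hp (by simp [h])
    have hq0 : q ≠ 0 := fun h => hp (by rw [← hq, h, eval_zero])
    have hX : (1 - X : ℂ[X]) ≠ 0 := fun h => by simpa using congrArg (eval 0) h
    simpa [T, h0, h2, hp0, hq0, hX, X_ne_zero] using hT
  intro i
  fin_cases i <;> assumption

end SymSquare

open SymSquare

theorem poch_succ (q : ℚ) (k : ℕ) : poch q (k + 1) = poch q k * (q + k) :=
  ascPochhammer_succ_eval k q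

theorem poch_neg_natCast_ne_zero {N k : ℕ} (hk : k ≤ N) : poch (-(N : ℚ)) k ≠ 0 := by
  simp only [poch, ne_eq, ascPochhammer_eval_eq_zero_iff, neg_neg, not_exists, not_and]
  intro j hj hjN
  have : j = N := by exact_mod_cast hjN
  omega

theorem coeff_Ppoly (N k : ℕ) : (Ppoly N).coeff k = if k ≤ N / 2 then Pcoef N k else 0 := by
  simp only [Ppoly, finsetSum_coeff, coeff_C_mul, coeff_X_pow, mul_ite, mul_one, mul_zero,
    Finset.sum_ite_eq, Finset.mem_range, Nat.lt_succ_iff]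

theorem Pcoef_succ {N j : ℕ} (hj : j < N) :
    Pcoef N (j + 1) * (((j : ℚ) + 1) * (j - N)) = Pcoef N j * ((j - N / 2) * (j + N / 2 + 1)) := by
  have hpoch := poch_neg_natCast_ne_zero hj.le
  have hjN : -(N : ℚ) + j ≠ 0 := by
    rw [neg_add_eq_sub]
    exact sub_ne_zero.mpr (by exact_mod_cast hj.ne)
  simp only [Pcoef, poch_succ, Nat.factorial_succ]
  push_cast
  field_simp
  ring

-- Since `N` is even, at `j = N / 2` the truncation matches the vanishing right-hand side.
theorem Ppoly_coeff_recurrence {N : ℕ} (heven : Even N) (j : ℕ) :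
    ((j : ℚ) + 1) * (j - N) * (Ppoly N).coeff (j + 1)
      = ((j : ℚ) ^ 2 + j - ((N : ℚ) ^ 2 + 2 * N) / 4) * (Ppoly N).coeff j := by
  obtain ⟨m, rfl⟩ := heven
  rw [coeff_Ppoly, coeff_Ppoly]
  rcases lt_trichotomy j m with hj | rfl | hj
  · rw [if_pos (by omega), if_pos (by omega)]
    linear_combination Pcoef_succ (N := m + m) (j := j) (by omega)
  · rw [if_neg (by omega), if_pos (by omega)]
    push_cast
    ring
  · rw [if_neg (by omega), if_neg (by omega)]
    ring

theorem hypergeometricODE_Ppoly {N : ℕ} (heven : Even N) :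
    HypergeometricODE (((N : ℚ) ^ 2 + 2 * N) / 4) (-((N : ℚ) + 1) / 2) (Ppoly N) := by
  unfold HypergeometricODE
  ext k
  have h := Ppoly_coeff_recurrence heven k
  rcases k with _ | _ | k
  all_goals
    simp only [mul_sub, sub_mul, add_mul, mul_one, one_mul, mul_assoc, coeff_add, coeff_sub,
      coeff_X_mul, coeff_C_mul, coeff_ofNat_mul, coeff_derivative, coeff_zero, mul_coeff_zero,
      coeff_C_zero, coeff_X_zero, zero_mul] at h ⊢
    push_cast at h ⊢
    linear_combination h

theorem hypergeometricODE_PpolyC {N : ℕ} (heven : Even N) :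
    HypergeometricODE (((N : ℂ) ^ 2 + 2 * N) / 4) (-((N : ℂ) + 1) / 2) (PpolyC N) := by
  have h := (hypergeometricODE_Ppoly heven).map (algebraMap ℚ ℂ)
  simp only [map_div₀, map_add, map_pow, map_mul, map_neg, map_natCast, map_ofNat,
    map_one] at h
  exact h

theorem eval_zero_PpolyC (N : ℕ) : (PpolyC N).eval 0 = 1 := by
  rw [← coeff_zero_eq_eval_zero, PpolyC, coeff_map, coeff_Ppoly]
  simp [Pcoef, poch]

theorem satThirdOrderODE_of_symSqPoly_eq_zero {N : ℕ} {r : ℂ → ℂ} {c : ℂ}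
    (hr : ∀ z, z ≠ 0 → z ≠ 1 → HasDerivAt r (c * r z / (z * (1 - z))) z) {F : ℂ[X]}
    (hF : symSqPoly (((N : ℂ) ^ 2 + 2 * N) / 4) (((N : ℂ) + 1) ^ 2 / 4) c F = 0) :
    SatThirdOrderODE N (fun w => r w * eval w F) := by
  intro z hz0 hz1
  have hz1' : 1 - z ≠ 0 := sub_ne_zero.mpr hz1.symm
  have hjet := fun k => iterate_deriv_eq_gaugeJet hr F k hz0 hz1
  have hF' := congrArg (eval z) hF
  simp only [symSqPoly, eval_add, eval_mul, eval_sub, eval_X, eval_one, eval_C, eval_ofNat,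
    eval_zero] at hF'
  rw [show deriv (fun w => r w * eval w F) z = deriv^[1] (fun w => r w * eval w F) z from rfl,
    hjet 3, hjet 2, hjet 1]
  field_simp
  linear_combination 2 * r z * hF'

theorem satThirdOrderODE_gauge_mul {N : ℕ} {r : ℂ → ℂ} {α β : ℂ} {f g : ℂ[X]}
    (hr : ∀ z, z ≠ 0 → z ≠ 1 → HasDerivAt r ((α + β) * r z / (z * (1 - z))) z)
    (hf : HypergeometricODE (((N : ℂ) ^ 2 + 2 * N) / 4) α f)
    (hg : HypergeometricODE (((N : ℂ) ^ 2 + 2 * N) / 4) β g)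
    (hα : α ^ 2 = ((N : ℂ) + 1) ^ 2 / 4) (hβ : β ^ 2 = ((N : ℂ) + 1) ^ 2 / 4) :
    SatThirdOrderODE N (fun w => r w * eval w (f * g)) :=
  satThirdOrderODE_of_symSqPoly_eq_zero hr (symSqPoly_mul_eq_zero hf hg hα hβ)

theorem stmt12_general (N : ℕ) (heven : Even N) :
    SatThirdOrderODE N (y1 N) ∧ SatThirdOrderODE N (y2 N) ∧ SatThirdOrderODE N (y3 N) ∧
    LinearIndependent ℂ
      ![fun z : {z : ℂ // z ≠ 0 ∧ z ≠ 1} => y1 N z,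
        fun z : {z : ℂ // z ≠ 0 ∧ z ≠ 1} => y2 N z,
        fun z : {z : ℂ // z ≠ 0 ∧ z ≠ 1} => y3 N z] := by
  have hP := hypergeometricODE_PpolyC heven
  have hQ := hP.comp_one_sub
  have hα : (-((N : ℂ) + 1) / 2) ^ 2 = ((N : ℂ) + 1) ^ 2 / 4 := by ring
  have hβ : (-(-((N : ℂ) + 1) / 2)) ^ 2 = ((N : ℂ) + 1) ^ 2 / 4 := by ring
  refine ⟨?_, ?_, ?_,
    linearIndependent_gauged_products (by simp [eval_zero_PpolyC]) N.succ_ne_zero⟩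
  · convert satThirdOrderODE_gauge_mul (fun z hz0 hz1 =>
      (hasDerivAt_div_one_sub_pow (N + 1) hz0 hz1).congr_deriv (by push_cast; ring))
      hQ hQ hβ hβ using 1
    funext w
    simp [y1, eval_comp, sq]
  · convert satThirdOrderODE_gauge_mul (fun z _ _ => (hasDerivAt_const z 1).congr_deriv (by ring))
      hQ hP hβ hα using 1
    funext w
    simp [y2, eval_comp]
  · convert satThirdOrderODE_gauge_mul (fun z hz0 hz1 =>
      (hasDerivAt_one_sub_div_pow (N + 1) hz0 hz1).congr_deriv (by push_cast; ring))
      hP hP hα hα using 1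
    funext w
    simp [y3, sq]

theorem stmt12 (N : ℕ) (hN : 0 < N) (heven : Even N) :
    SatThirdOrderODE N (y1 N) ∧ SatThirdOrderODE N (y2 N) ∧ SatThirdOrderODE N (y3 N) ∧
    LinearIndependent ℂ
      ![fun z : {z : ℂ // z ≠ 0 ∧ z ≠ 1} => y1 N z,
        fun z : {z : ℂ // z ≠ 0 ∧ z ≠ 1} => y2 N z,
        fun z : {z : ℂ // z ≠ 0 ∧ z ≠ 1} => y3 N z] :=
  stmt12_general N heven
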